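/- Let $k$ be a field of characteristic $p$, $n\geq m$ and $2\leq m\leq p$, and $V_r$ the homogeneous polynomials of degree $r-1$ in $X,Y$ over $k$. The kernel of the map $\lambda\colon V_n\otimes V_m\to V_{n+1}\otimes V_{m-1}$, $f\otimes g\mapsto Xf\otimes \partial g/\partial X + Yf\otimes \partial g/\partial Y$, is isomorphic to $V_{n-m+1}$; specifically, the injective linear map $\eta\colon V_{n-m+1}\to V_n\otimes V_m$ given by $\eta(f)=\sum_{i=0}^{m-1}(-1)^{m-1-i}\binom{m-1}{i} fX^iY^{m-1-i}\otimes X^{m-1-i}Y^i$ has image equal to $\ker\lambda$. -/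

import Mathlib

open MvPolynomial TensorProduct

/-- `Vr k r` is the space of homogeneous polynomials of degree `r - 1`
in the two variables `X = X 0` and `Y = X 1` over `k`. -/
def Vr (k : Type) [CommRing k] (r : ℕ) : Submodule k (MvPolynomial (Fin 2) k) :=
  homogeneousSubmodule (Fin 2) k (r - 1)

theorem mul_mem_Vr (k : Type) [CommRing k] {a b c : ℕ} (ha : 1 ≤ a) (hb : 1 ≤ b)
    (hc : c = a + b - 1) {f g : MvPolynomial (Fin 2) k}
    (hf : f ∈ Vr k a) (hg : g ∈ Vr k b) : f * g ∈ Vr k c := by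
  rw [Vr, mem_homogeneousSubmodule] at hf hg ⊢
  have h := hf.mul hg
  have he : (a - 1) + (b - 1) = c - 1 := by omega
  rwa [he] at h

theorem X_mem_Vr (k : Type) [CommRing k] (v : Fin 2) : X v ∈ Vr k 2 := by
  have h : (2 : ℕ) - 1 = 1 := rfl
  rw [Vr, h, mem_homogeneousSubmodule]
  exact isHomogeneous_X k v

theorem pderiv_isHomogeneous {k : Type} [CommRing k] {d : ℕ} {φ : MvPolynomial (Fin 2) k}
    (hφ : φ.IsHomogeneous d) (v : Fin 2) : (pderiv v φ).IsHomogeneous (d - 1) := by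
  classical
  have hrep : pderiv v φ = ∑ s ∈ φ.support, pderiv v (monomial s (coeff s φ)) := by
    conv_lhs => rw [as_sum φ]
    rw [map_sum]
  rw [← mem_homogeneousSubmodule, hrep]
  apply Submodule.sum_mem
  intro s hs
  rw [pderiv_monomial]
  by_cases h0 : s v = 0
  · simp [h0]
  · rw [mem_homogeneousSubmodule]
    apply isHomogeneous_monomial
    have hsd : s.degree = d := by
      rw [Finsupp.degree_eq_weight_one]
      exact hφ (mem_support_iff.mp hs)
    have hle : Finsupp.single v 1 ≤ s := Finsupp.single_le_iff.mpr (by omega)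
    have key : (s - Finsupp.single v 1) + Finsupp.single v 1 = s := tsub_add_cancel_of_le hle
    have hadd : ((s - Finsupp.single v 1) + Finsupp.single v 1).degree
        = (s - Finsupp.single v 1).degree + (Finsupp.single v 1).degree := by
      simp [Finsupp.degree_eq_weight_one, map_add]
    have hsingle : (Finsupp.single v 1).degree = 1 := by
      exact Finsupp.degree_single v 1
    rw [key] at hadd
    omega

theorem pderiv_mem_Vr (k : Type) [CommRing k] {r : ℕ} {f : MvPolynomial (Fin 2) k}
    (hf : f ∈ Vr k r) (v : Fin 2) : pderiv v f ∈ Vr k (r - 1) := by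
  rw [Vr, mem_homogeneousSubmodule] at hf ⊢
  exact pderiv_isHomogeneous hf v

theorem monomial_mem_Vr (k : Type) [CommRing k] (a b : ℕ) {r : ℕ} (hr : r = a + b + 1) :
    X 0 ^ a * X 1 ^ b ∈ Vr (k := k) r := by
  rw [Vr, mem_homogeneousSubmodule]
  have h := ((isHomogeneous_X k (0 : Fin 2)).pow a).mul ((isHomogeneous_X k (1 : Fin 2)).pow b)
  have he : 1 * a + 1 * b = r - 1 := by omega
  rwa [he] at h

/-!
Expanding the right factor in monomials, write `t ∈ V_n ⊗ V_m` as `∑ₐ Aₐ ⊗ X^a Y^(m-1-a)`.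
Then `λ t = 0` says `(a+1) X A_{a+1} + (m-1-a) Y Aₐ = 0` for `a < m-1`. As `1, …, m-1` are
invertible in `k`, this recursion gives `X^a Aₐ = (-1)^a C(m-1,a) Y^a A₀`. At `a = m-1` this says
that `X^(m-1)` divides `Y^(m-1) A₀`, so `A₀ = X^(m-1) f` and `t = η f`. Conversely,
`(a+1) C(m-1,a+1) = (m-1-a) C(m-1,a)` gives `λ ∘ η = 0`, and `A₀(η f) = X^(m-1) f` gives
injectivity. All computations take place in `k[X,Y] ⊗ k[X,Y]`, into which `V_n ⊗ V_m` embeds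
because vector spaces are flat.
-/

lemma natCast_ne_zero_of_factorial_ne_zero {R : Type*} [Semiring R] {N j : ℕ}
    (hN : (N.factorial : R) ≠ 0) (hj0 : 0 < j) (hj : j ≤ N) : (j : R) ≠ 0 := by
  obtain ⟨c, hc⟩ := Nat.dvd_factorial hj0 hj
  intro hzero
  exact hN (by rw [hc, Nat.cast_mul, hzero, zero_mul])

namespace MvPolynomial

lemma IsHomogeneous.of_X_pow_mul {σ R : Type*} [CommSemiring R] {φ : MvPolynomial σ R} {i : σ}
    {j n : ℕ} (h : (X i ^ j * φ).IsHomogeneous (j + n)) : φ.IsHomogeneous n := by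
  intro s hs
  have hcoeff : coeff (s + Finsupp.single i j) (X i ^ j * φ) ≠ 0 := by
    rwa [X_pow_eq_monomial, mul_comm, coeff_mul_monomial, mul_one]
  have := h hcoeff
  rw [map_add, Finsupp.weight_single, Pi.one_apply, smul_eq_mul, mul_one] at this
  omega

section RightCoeffs

variable {σ R : Type*} [CommSemiring R] [DecidableEq σ]

noncomputable def rightCoeffs :
    MvPolynomial σ R ⊗[R] MvPolynomial σ R ≃ₗ[R] (σ →₀ ℕ) →₀ MvPolynomial σ R :=
  equivFinsuppOfBasisRight (basisMonomials σ R)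

@[simp]
lemma rightCoeffs_tmul (f g : MvPolynomial σ R) (s : σ →₀ ℕ) :
    rightCoeffs (f ⊗ₜ g) s = coeff s g • f :=
  equivFinsuppOfBasisRight_apply_tmul_apply _ _ _ _

lemma rightCoeffs_mapIncl_mem (P Q : Submodule R (MvPolynomial σ R)) (t : P ⊗[R] Q)
    (s : σ →₀ ℕ) : rightCoeffs (mapIncl P Q t) s ∈ P := by
  induction t with
  | zero => simp
  | tmul f g => simpa using P.smul_mem _ f.2
  | add t u ht hu => simpa using P.add_mem ht hu

lemma rightCoeffs_mapIncl_eq_zero {P Q : Submodule R (MvPolynomial σ R)} {d : ℕ}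
    (hQ : ∀ g ∈ Q, g.IsHomogeneous d) (t : P ⊗[R] Q) {s : σ →₀ ℕ}
    (hs : s.degree ≠ d) :
    rightCoeffs (mapIncl P Q t) s = 0 := by
  induction t with
  | zero => simp
  | tmul f g => simp [(hQ g g.2).coeff_eq_zero hs]
  | add t u ht hu => simp [ht, hu]

end RightCoeffs

section TwoVariables

noncomputable def expXY (a b : ℕ) : Fin 2 →₀ ℕ := Finsupp.single 0 a + Finsupp.single 1 b

@[simp]
lemma expXY_apply_zero (a b : ℕ) : expXY a b 0 = a := by
  simp [expXY]

@[simp]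
lemma expXY_apply_one (a b : ℕ) : expXY a b 1 = b := by
  simp [expXY]

lemma eq_expXY (s : Fin 2 →₀ ℕ) : s = expXY (s 0) (s 1) := by
  ext i; fin_cases i <;> simp

@[simp]
lemma expXY_inj {a b c d : ℕ} : expXY a b = expXY c d ↔ a = c ∧ b = d := by
  refine ⟨fun h => ⟨?_, ?_⟩, fun ⟨hac, hbd⟩ => hac ▸ hbd ▸ rfl⟩
  · simpa using DFunLike.congr_fun h 0
  · simpa using DFunLike.congr_fun h 1

@[simp]
lemma degree_expXY (a b : ℕ) : (expXY a b).degree = a + b := by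
  simp [expXY]

lemma expXY_add_single_zero (a b : ℕ) : expXY a b + Finsupp.single 0 1 = expXY (a + 1) b := by
  ext i; fin_cases i <;> simp [expXY]

lemma expXY_add_single_one (a b : ℕ) : expXY a b + Finsupp.single 1 1 = expXY a (b + 1) := by
  ext i; fin_cases i <;> simp [expXY]

variable {R : Type*} [CommSemiring R]

lemma coeff_X_pow_mul_X_pow (a b : ℕ) (s : Fin 2 →₀ ℕ) :
    coeff s (X 0 ^ a * X 1 ^ b : MvPolynomial (Fin 2) R) = if expXY a b = s then 1 else 0 := by
  rw [X_pow_eq_monomial, X_pow_eq_monomial, monomial_mul, one_mul, coeff_monomial, expXY]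

lemma ext_expXY {T U : MvPolynomial (Fin 2) R ⊗[R] MvPolynomial (Fin 2) R}
    (h : ∀ a b, rightCoeffs T (expXY a b) = rightCoeffs U (expXY a b)) : T = U :=
  rightCoeffs.injective <| Finsupp.ext fun s => (eq_expXY s).symm ▸ h (s 0) (s 1)

noncomputable def lambdaMap :
    MvPolynomial (Fin 2) R ⊗[R] MvPolynomial (Fin 2) R →ₗ[R]
      MvPolynomial (Fin 2) R ⊗[R] MvPolynomial (Fin 2) R :=
  TensorProduct.map (LinearMap.mulLeft R (X 0)) (pderiv (0 : Fin 2)).toLinearMap +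
    TensorProduct.map (LinearMap.mulLeft R (X 1)) (pderiv (1 : Fin 2)).toLinearMap

@[simp]
lemma lambdaMap_tmul (f g : MvPolynomial (Fin 2) R) :
    lambdaMap (f ⊗ₜ g) = (X 0 * f) ⊗ₜ pderiv 0 g + (X 1 * f) ⊗ₜ pderiv 1 g := by
  simp [lambdaMap]

lemma rightCoeffs_lambdaMap (T : MvPolynomial (Fin 2) R ⊗[R] MvPolynomial (Fin 2) R) (a b : ℕ) :
    rightCoeffs (lambdaMap T) (expXY a b) =
      ((a : MvPolynomial (Fin 2) R) + 1) * X 0 * rightCoeffs T (expXY (a + 1) b) +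
        ((b : MvPolynomial (Fin 2) R) + 1) * X 1 * rightCoeffs T (expXY a (b + 1)) := by
  induction T with
  | zero => simp
  | tmul f g =>
    simp only [lambdaMap_tmul, map_add, Finsupp.add_apply, rightCoeffs_tmul, coeff_pderiv,
      expXY_apply_zero, expXY_apply_one, expXY_add_single_zero, expXY_add_single_one,
      smul_eq_C_mul, map_mul, map_natCast, map_one]
    ring
  | add T U hT hU =>
    simp only [map_add, Finsupp.add_apply, hT, hU]
    ring

end TwoVariables

section Eta

variable {R : Type*} [CommRing R]

noncomputable def etaPoly (m : ℕ) (f : MvPolynomial (Fin 2) R) :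
    MvPolynomial (Fin 2) R ⊗[R] MvPolynomial (Fin 2) R :=
  ∑ i ∈ Finset.range m, ((-1 : R) ^ (m - 1 - i) * ((m - 1).choose i : R)) •
    ((f * (X 0 ^ i * X 1 ^ (m - 1 - i))) ⊗ₜ (X 0 ^ (m - 1 - i) * X 1 ^ i))

lemma rightCoeffs_etaPoly (m : ℕ) (f : MvPolynomial (Fin 2) R) (a b : ℕ) :
    rightCoeffs (etaPoly m f) (expXY a b) =
      if a + b + 1 = m then
        (-1) ^ a * ((m - 1).choose b : MvPolynomial (Fin 2) R) * f * X 0 ^ b * X 1 ^ a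
      else 0 := by
  simp only [etaPoly, map_sum, map_smul, Finsupp.coe_finsetSum, Finset.sum_apply,
    Finsupp.smul_apply, rightCoeffs_tmul, coeff_X_pow_mul_X_pow, expXY_inj, ite_smul, one_smul,
    zero_smul, smul_ite, smul_zero]
  split_ifs with h
  · rw [Finset.sum_eq_single b]
    · rw [if_pos (by omega), show m - 1 - b = a by omega, smul_eq_C_mul]
      simp only [map_mul, map_pow, map_neg, map_one, map_natCast]
      ring
    · intro i _ hi
      rw [if_neg (by omega)]
    · intro hb
      exact absurd (Finset.mem_range.mpr (by omega)) hb
  · refine Finset.sum_eq_zero fun i hi => if_neg ?_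
    have := Finset.mem_range.mp hi
    omega

lemma rightCoeffs_etaPoly_zero {m : ℕ} (hm : 1 ≤ m) (f : MvPolynomial (Fin 2) R) :
    rightCoeffs (etaPoly m f) (expXY 0 (m - 1)) = f * X 0 ^ (m - 1) := by
  rw [rightCoeffs_etaPoly, if_pos (by omega), Nat.choose_self]
  simp

lemma eq_zero_of_etaPoly_eq_zero [IsDomain R] {m : ℕ} (hm : 1 ≤ m) {f : MvPolynomial (Fin 2) R}
    (h : etaPoly m f = 0) : f = 0 := by
  have h0 := congrArg (rightCoeffs · (expXY 0 (m - 1))) h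
  simp only [rightCoeffs_etaPoly_zero hm, map_zero, Finsupp.coe_zero, Pi.zero_apply] at h0
  exact (mul_eq_zero.mp h0).resolve_right (pow_ne_zero _ (X_ne_zero 0))

lemma lambdaMap_etaPoly (m : ℕ) (f : MvPolynomial (Fin 2) R) : lambdaMap (etaPoly m f) = 0 := by
  refine ext_expXY fun a b => ?_
  rw [rightCoeffs_lambdaMap, rightCoeffs_etaPoly, rightCoeffs_etaPoly, map_zero,
    Finsupp.coe_zero, Pi.zero_apply]
  split_ifs with h h'
  · have hpascal : (((m - 1).choose (b + 1) * (b + 1) : ℕ) : MvPolynomial (Fin 2) R) =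
        (((m - 1).choose b * (a + 1) : ℕ) : MvPolynomial (Fin 2) R) := by
      rw [Nat.choose_succ_right_eq, show m - 1 - b = a + 1 by omega]
    push_cast at hpascal
    linear_combination (-1) ^ a * f * X 0 ^ (b + 1) * X 1 ^ (a + 1) * hpascal
  · omega
  · omega
  · simp

end Eta

section Kernel

variable {k : Type*} [Field k]

lemma not_X_zero_dvd_X_one_pow (j : ℕ) : ¬(X 0 : MvPolynomial (Fin 2) k) ∣ X 1 ^ j := fun h =>
  absurd (X_dvd_X.mp (X_prime.dvd_of_dvd_pow h)) (by decide)

lemma X_pow_mul_rightCoeffs_of_lambdaMap_eq_zero {m : ℕ} (hchar : ((m - 1).factorial : k) ≠ 0)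
    {T : MvPolynomial (Fin 2) k ⊗[k] MvPolynomial (Fin 2) k} (hT : lambdaMap T = 0)
    {a : ℕ} (ha : a < m) :
    X 0 ^ a * rightCoeffs T (expXY a (m - 1 - a)) =
      (-1) ^ a * ((m - 1).choose a : MvPolynomial (Fin 2) k) * X 1 ^ a *
        rightCoeffs T (expXY 0 (m - 1)) := by
  obtain ⟨A, hA⟩ : ∃ A : ℕ → MvPolynomial (Fin 2) k,
      ∀ a, A a = rightCoeffs T (expXY a (m - 1 - a)) := ⟨_, fun _ => rfl⟩
  have hrec : ∀ a, a + 1 < m →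
      ((a : MvPolynomial (Fin 2) k) + 1) * X 0 * A (a + 1) +
        ((m - 1 - a : ℕ) : MvPolynomial (Fin 2) k) * X 1 * A a = 0 := by
    intro a ha
    have h := congrArg (rightCoeffs · (expXY a (m - 1 - (a + 1)))) hT
    simp only [rightCoeffs_lambdaMap, map_zero, Finsupp.coe_zero, Pi.zero_apply] at h
    rw [← hA, show m - 1 - (a + 1) + 1 = m - 1 - a by omega, ← hA] at h
    rw [← h, show m - 1 - a = m - 1 - (a + 1) + 1 by omega]
    push_cast
    ring
  rw [← hA, show m - 1 = m - 1 - 0 from rfl, ← hA]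
  induction a with
  | zero => simp
  | succ a ih =>
    have hpascal : (((m - 1).choose (a + 1) * (a + 1) : ℕ) : MvPolynomial (Fin 2) k) =
        (((m - 1).choose a * (m - 1 - a) : ℕ) : MvPolynomial (Fin 2) k) :=
      congrArg _ (Nat.choose_succ_right_eq _ _)
    have hunit : ((a + 1 : ℕ) : MvPolynomial (Fin 2) k) ≠ 0 := by
      rw [← map_natCast C, Ne, C_eq_zero]
      exact natCast_ne_zero_of_factorial_ne_zero hchar (by omega) (by omega)
    refine mul_left_cancel₀ hunit ?_
    push_cast at hpascal ⊢
    linear_combination X 0 ^ a * hrec a ha - (m - 1 - a : ℕ) * X 1 * ih (by omega) +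
      (-1) ^ a * X 1 ^ (a + 1) * A 0 * hpascal

theorem exists_eq_etaPoly_of_lambdaMap_eq_zero {m : ℕ} (hm : 1 ≤ m)
    (hchar : ((m - 1).factorial : k) ≠ 0)
    {T : MvPolynomial (Fin 2) k ⊗[k] MvPolynomial (Fin 2) k}
    (hdeg : ∀ a b, a + b + 1 ≠ m → rightCoeffs T (expXY a b) = 0) (hT : lambdaMap T = 0) :
    ∃ f, T = etaPoly m f := by
  have hpow := fun a => X_pow_mul_rightCoeffs_of_lambdaMap_eq_zero (a := a) hchar hT
  obtain ⟨f, hf⟩ : X 0 ^ (m - 1) ∣ rightCoeffs T (expXY 0 (m - 1)) := by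
    refine X_prime.pow_dvd_of_dvd_mul_left _ (not_X_zero_dvd_X_one_pow (m - 1))
      ⟨(-1) ^ (m - 1) * rightCoeffs T (expXY (m - 1) 0), ?_⟩
    have hsq : ((-1 : MvPolynomial (Fin 2) k) ^ (m - 1)) ^ 2 = 1 := by
      rw [← pow_mul, mul_comm, pow_mul, neg_one_sq, one_pow]
    have h := hpow (m - 1) (by omega)
    rw [Nat.sub_self, Nat.choose_self, Nat.cast_one, mul_one] at h
    linear_combination -(-1) ^ (m - 1) * h - X 1 ^ (m - 1) * rightCoeffs T (expXY 0 (m - 1)) * hsq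
  refine ⟨f, ext_expXY fun a b => ?_⟩
  rw [rightCoeffs_etaPoly]
  split_ifs with hab
  · obtain rfl : b = m - 1 - a := by omega
    refine mul_left_cancel₀ (pow_ne_zero a (X_ne_zero (0 : Fin 2))) ?_
    have hsplit : (X 0 : MvPolynomial (Fin 2) k) ^ (m - 1) = X 0 ^ a * X 0 ^ (m - 1 - a) := by
      rw [← pow_add]; congr 1; omega
    rw [hpow a (by omega), hf, Nat.choose_symm (by omega), hsplit]
    ring
  · exact hdeg a b hab

end Kernel

end MvPolynomial

/-- The kernel of `λ : V_n ⊗ V_m → V_{n+1} ⊗ V_{m-1}`,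
`λ(f ⊗ g) = Xf ⊗ ∂g/∂X + Yf ⊗ ∂g/∂Y`, is isomorphic to `V_{n-m+1}`: specifically, the
linear map `η(f) = ∑_{i=0}^{m-1} (-1)^{m-1-i} C(m-1,i) • (f X^i Y^{m-1-i} ⊗ X^{m-1-i} Y^i)`
is injective with image equal to `ker λ`. -/
theorem lambda_kernel (p : ℕ) (hp : p.Prime) (k : Type) [Field k] [CharP k p]
    (n m : ℕ) (hm2 : 2 ≤ m) (hmp : m ≤ p) (hmn : m ≤ n)
    (lam : TensorProduct k (Vr k n) (Vr k m) →ₗ[k]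
      TensorProduct k (Vr k (n + 1)) (Vr k (m - 1)))
    (hlam : ∀ (f : Vr k n) (g : Vr k m),
      lam (f ⊗ₜ g) =
        (⟨X 0 * f.1, mul_mem_Vr k (by norm_num) (by omega) (by omega)
            (X_mem_Vr k 0) f.2⟩ : Vr k (n + 1)) ⊗ₜ
          (⟨pderiv 0 g.1, pderiv_mem_Vr k g.2 0⟩ : Vr k (m - 1))
        + (⟨X 1 * f.1, mul_mem_Vr k (by norm_num) (by omega) (by omega)
            (X_mem_Vr k 1) f.2⟩ : Vr k (n + 1)) ⊗ₜ
          (⟨pderiv 1 g.1, pderiv_mem_Vr k g.2 1⟩ : Vr k (m - 1)))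
    (eta : Vr k (n - m + 1) →ₗ[k] TensorProduct k (Vr k n) (Vr k m))
    (heta : ∀ f : Vr k (n - m + 1),
      eta f = ∑ i ∈ (Finset.range m).attach,
        ((-1 : k) ^ (m - 1 - i.1) * ((m - 1).choose i.1 : k)) •
          ((⟨f.1 * (X 0 ^ i.1 * X 1 ^ (m - 1 - i.1)),
              mul_mem_Vr k (by omega) (by omega) (by omega) f.2
                (monomial_mem_Vr k (r := m) _ _
                  (by have := Finset.mem_range.mp i.2; omega))⟩ : Vr k n) ⊗ₜ
            (⟨X 0 ^ (m - 1 - i.1) * X 1 ^ i.1,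
              monomial_mem_Vr k _ _
                (by have := Finset.mem_range.mp i.2; omega)⟩ : Vr k m))) :
    Function.Injective eta ∧ LinearMap.range eta = LinearMap.ker lam ∧
      Nonempty ((LinearMap.ker lam) ≃ₗ[k] Vr k (n - m + 1)) := by
  have hm : 1 ≤ m := by omega
  have hι := Module.Flat.tensorProduct_mapIncl_injective_of_right (Vr k n) (Vr k m)
  have hι' := Module.Flat.tensorProduct_mapIncl_injective_of_right (Vr k (n + 1)) (Vr k (m - 1))
  have hlam' : mapIncl (Vr k (n + 1)) (Vr k (m - 1)) ∘ₗ lam =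
      lambdaMap ∘ₗ mapIncl (Vr k n) (Vr k m) :=
    TensorProduct.ext' fun f g => by simp [hlam]
  have heta' : ∀ f, mapIncl _ _ (eta f) = etaPoly m f.1 := fun f => by
    rw [etaPoly, ← Finset.sum_attach]
    simp [heta]
  have hchar : ((m - 1).factorial : k) ≠ 0 := by
    rw [Ne, CharP.cast_eq_zero_iff k p, hp.dvd_factorial]
    omega
  have hinj : Function.Injective eta := (injective_iff_map_eq_zero eta).mpr fun f hf =>
    Subtype.ext <| eq_zero_of_etaPoly_eq_zero hm (by rw [← heta', hf, map_zero])
  have hrange : LinearMap.range eta = LinearMap.ker lam := by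
    refine le_antisymm ?_ fun t ht => ?_
    · rintro _ ⟨f, rfl⟩
      rw [LinearMap.mem_ker]
      refine hι' ?_
      rw [map_zero, ← LinearMap.comp_apply, hlam', LinearMap.comp_apply, heta',
        lambdaMap_etaPoly]
    obtain ⟨f, hf⟩ := exists_eq_etaPoly_of_lambdaMap_eq_zero hm hchar
      (fun a b hab => rightCoeffs_mapIncl_eq_zero (Q := Vr k m)
        (fun g hg => (mem_homogeneousSubmodule _ g).mp hg) t (by simp; omega))
      (by rw [← LinearMap.comp_apply, ← hlam', LinearMap.comp_apply, LinearMap.mem_ker.mp ht,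
        map_zero])
    have hfmem : f ∈ Vr k (n - m + 1) := by
      have h := rightCoeffs_mapIncl_mem _ _ t (expXY 0 (m - 1))
      rw [hf, rightCoeffs_etaPoly_zero hm, mul_comm, Vr,
        mem_homogeneousSubmodule, show n - 1 = (m - 1) + (n - m + 1 - 1) by omega] at h
      exact h.of_X_pow_mul
    exact ⟨⟨f, hfmem⟩, hι (by rw [heta', hf])⟩
  exact ⟨hinj, hrange,
    ⟨((LinearEquiv.ofInjective eta hinj).trans (LinearEquiv.ofEq _ _ hrange)).symm⟩⟩
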